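/- arXiv:0912.3770 — 2 statements merged into one kernel-verified Lean document; each statement's English description precedes it below -/
import Mathlib

section
/- Let W = X₁ + … + X_k be a sum of independent Bernoulli random variables with parameters p₁, …, p_k, and let λ = p₁ + … + p_k > 0. Then the total variation distance between the law of W and the Poisson distribution with mean λ is at most ((1 − e^{−λ})/λ) · Σᵢ pᵢ². -/
/-
Chen–Stein method. For `A ⊆ ℕ` let `g` solve the Stein equation
`λ g(n+1) - n g(n) = 1_A(n) - Po_λ(A)` with `g 0 = 0`. Evaluating it at `W` and taking
expectations, `P(W ∈ A) - Po_λ(A) = E[λ g(W+1) - W g(W)] = Σᵢ pᵢ² E[g(Wᵢ+2) - g(Wᵢ+1)]`, where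
`Wᵢ = W - Xᵢ` is independent of `Xᵢ`; so it suffices to bound the increments of `g` by
`(1 - e^{-λ})/λ`. The solution for `A` is the sum over `j ∈ A` of the solutions for `{j}`, whose
increment at `m` is negative unless `j = m + 1` and at most `(1 - e^{-λ})/λ` there. This bounds the
increments from above, and from below because the solutions for `A` and `Aᶜ` sum to zero.
-/

open Real Set Filter MeasureTheory ProbabilityTheory

open scoped Nat

namespace ChenStein

variable {L : ℝ}

noncomputable def poissonWeight (L : ℝ) (n : ℕ) : ℝ := exp (-L) * L ^ n / n !

noncomputable def poissonCdf (L : ℝ) (n : ℕ) : ℝ := ∑ i ∈ Finset.range n, poissonWeight L i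

noncomputable def poissonTail (L : ℝ) (n : ℕ) : ℝ := ∑' i, poissonWeight L (i + n)

noncomputable def poissonMass (L : ℝ) (A : Set ℕ) : ℝ := ∑' n, A.indicator (poissonWeight L) n

lemma hasSum_poissonWeight (L : ℝ) : HasSum (poissonWeight L) 1 := by
  unfold poissonWeight
  have h := (NormedSpace.expSeries_div_hasSum_exp L).mul_left (exp (-L))
  rw [← exp_eq_exp_ℝ, ← exp_add, neg_add_cancel, exp_zero] at h
  simpa only [mul_div_assoc] using h

lemma summable_poissonWeight (L : ℝ) : Summable (poissonWeight L) :=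
  (hasSum_poissonWeight L).summable

lemma poissonWeight_zero : poissonWeight L 0 = exp (-L) := by simp [poissonWeight]

lemma poissonWeight_pos (hL : 0 < L) (n : ℕ) : 0 < poissonWeight L n := by
  unfold poissonWeight; positivity

lemma poissonWeight_ne_zero (hL : L ≠ 0) (n : ℕ) : poissonWeight L n ≠ 0 := by
  unfold poissonWeight; positivity

lemma poissonWeight_succ (n : ℕ) : poissonWeight L (n + 1) = L / (n + 1) * poissonWeight L n := by
  simp only [poissonWeight, Nat.factorial_succ, Nat.cast_mul, pow_succ]
  field_simp
  push_cast
  ring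

lemma poissonCdf_add_poissonTail (n : ℕ) : poissonCdf L n + poissonTail L n = 1 :=
  ((summable_poissonWeight L).sum_add_tsum_nat_add n).trans (hasSum_poissonWeight L).tsum_eq

lemma mul_poissonWeight (n : ℕ) : L * poissonWeight L n = (n + 1) * poissonWeight L (n + 1) := by
  rw [poissonWeight_succ, ← mul_assoc, mul_div_cancel₀ _ (by positivity)]

lemma mul_poissonCdf_le (hL : 0 < L) (m : ℕ) :
    L * poissonCdf L (m + 1) ≤ (m + 1) * (poissonCdf L (m + 2) - exp (-L)) := by
  have hshift : poissonCdf L (m + 2) - exp (-L) =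
      ∑ i ∈ Finset.range (m + 1), poissonWeight L (i + 1) := by
    rw [poissonCdf, Finset.sum_range_succ', poissonWeight_zero, add_sub_cancel_right]
  rw [hshift, poissonCdf, Finset.mul_sum, Finset.mul_sum]
  refine Finset.sum_le_sum fun i hi => ?_
  have hi : (i : ℝ) + 1 ≤ m + 1 := by
    exact_mod_cast Nat.succ_le_succ (Nat.lt_succ_iff.mp (Finset.mem_range.mp hi))
  rw [mul_poissonWeight]
  exact mul_le_mul_of_nonneg_right hi (poissonWeight_pos hL _).le

lemma succ_mul_poissonTail_le (hL : 0 < L) (m : ℕ) :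
    (m + 1) * poissonTail L (m + 2) ≤ L * poissonTail L (m + 1) := by
  have hs : Summable fun i => poissonWeight L (i + (m + 2)) :=
    (summable_nat_add_iff _).mpr (summable_poissonWeight L)
  rw [poissonTail, poissonTail, ← tsum_mul_left, ← tsum_mul_left]
  refine (hs.mul_left _).tsum_le_tsum (fun i => ?_) ?_
  · have hi : (m : ℝ) + 1 ≤ (i + (m + 1) : ℕ) + 1 := by push_cast; linarith [i.cast_nonneg (α := ℝ)]
    rw [mul_poissonWeight, show i + (m + 1) + 1 = i + (m + 2) by omega]
    exact mul_le_mul_of_nonneg_right hi (poissonWeight_pos hL _).le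
  · exact ((summable_nat_add_iff _).mpr (summable_poissonWeight L)).mul_left L

lemma hasSum_indicator_poissonWeight (L : ℝ) (A : Set ℕ) :
    HasSum (A.indicator (poissonWeight L)) (poissonMass L A) :=
  ((summable_poissonWeight L).indicator A).hasSum

lemma poissonMass_add_poissonMass_compl (A : Set ℕ) :
    poissonMass L A + poissonMass L Aᶜ = 1 := by
  have h := (hasSum_indicator_poissonWeight L A).add
    (hasSum_indicator_poissonWeight L Aᶜ)
  rw [← Pi.add_def, indicator_self_add_compl] at h
  exact h.unique (hasSum_poissonWeight L)

noncomputable def cdfRatio (L : ℝ) (n : ℕ) : ℝ := poissonCdf L (n + 1) / poissonWeight L n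

noncomputable def tailRatio (L : ℝ) (n : ℕ) : ℝ := poissonTail L (n + 1) / poissonWeight L n

lemma cdfRatio_le_succ (hL : 0 < L) (m : ℕ) : cdfRatio L m ≤ cdfRatio L (m + 1) := by
  have hcdf : L / (m + 1) * poissonCdf L (m + 1) ≤ poissonCdf L (m + 2) := by
    rw [div_mul_eq_mul_div, div_le_iff₀ (by positivity), mul_comm _ ((m : ℝ) + 1)]
    linarith [mul_poissonCdf_le hL m, mul_pos (m.cast_add_one_pos (α := ℝ)) (exp_pos (-L))]
  have hπ := poissonWeight_pos hL m
  rw [cdfRatio, cdfRatio, poissonWeight_succ, div_le_div_iff₀ hπ (by positivity)]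
  nlinarith

lemma tailRatio_succ_le (hL : 0 < L) (m : ℕ) : tailRatio L (m + 1) ≤ tailRatio L m := by
  have htail : poissonTail L (m + 2) ≤ L / (m + 1) * poissonTail L (m + 1) := by
    rw [div_mul_eq_mul_div, le_div_iff₀ (by positivity), mul_comm]
    exact succ_mul_poissonTail_le hL m
  have hπ := poissonWeight_pos hL m
  rw [tailRatio, tailRatio, poissonWeight_succ, div_le_div_iff₀ (by positivity) hπ]
  nlinarith

lemma poissonWeight_succ_mul_tailRatio_add_cdfRatio_le (hL : 0 < L) (m : ℕ) :
    poissonWeight L (m + 1) * (tailRatio L (m + 1) + cdfRatio L m) ≤ 1 - exp (-L) := by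
  have hcdf : L / (m + 1) * poissonCdf L (m + 1) ≤ poissonCdf L (m + 2) - exp (-L) := by
    rw [div_mul_eq_mul_div, div_le_iff₀ (by positivity), mul_comm _ ((m : ℝ) + 1)]
    exact mul_poissonCdf_le hL m
  have hπ := (poissonWeight_pos hL m).ne'
  calc poissonWeight L (m + 1) * (tailRatio L (m + 1) + cdfRatio L m)
      = poissonTail L (m + 2) + L / (m + 1) * poissonCdf L (m + 1) := by
        rw [tailRatio, cdfRatio, mul_add, mul_div_cancel₀ _ (poissonWeight_pos hL _).ne',
          poissonWeight_succ]
        field_simp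
    _ ≤ 1 - exp (-L) := by linarith [poissonCdf_add_poissonTail (L := L) (m + 2)]

noncomputable def steinSolution (L : ℝ) (A : Set ℕ) : ℕ → ℝ
  | 0 => 0
  | n + 1 => (∑ j ∈ Finset.range (n + 1),
      poissonWeight L j * (A.indicator 1 j - poissonMass L A)) / (L * poissonWeight L n)

lemma steinSolution_stein_eq (hL : L ≠ 0) (A : Set ℕ) (n : ℕ) :
    L * steinSolution L A (n + 1) - n * steinSolution L A n =
      A.indicator 1 n - poissonMass L A := by
  cases n with
  | zero =>
    have := poissonWeight_ne_zero hL 0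
    simp only [steinSolution, zero_add, Finset.sum_range_one, CharP.cast_eq_zero, zero_mul,
      sub_zero]
    field_simp
  | succ n =>
    have := poissonWeight_ne_zero hL n
    have : (n : ℝ) + 1 ≠ 0 := n.cast_add_one_ne_zero
    rw [steinSolution, steinSolution, Finset.sum_range_succ _ (n + 1),
      poissonWeight_succ (n := n)]
    push_cast
    field_simp
    ring

lemma steinSolution_compl (A : Set ℕ) (n : ℕ) :
    steinSolution L Aᶜ n = -steinSolution L A n := by
  cases n with
  | zero => simp [steinSolution]
  | succ n =>
    have hmass : poissonMass L Aᶜ = 1 - poissonMass L A := by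
      linarith [poissonMass_add_poissonMass_compl (L := L) A]
    simp only [steinSolution, hmass, indicator_compl, Pi.sub_apply, Pi.one_apply, ← neg_div,
      ← Finset.sum_neg_distrib]
    congr 1
    exact Finset.sum_congr rfl fun j _ => by ring

/-- The value at `n + 1` of the Stein solution for the singleton `{j}`. -/
noncomputable def singletonSolution (L : ℝ) (j n : ℕ) : ℝ :=
  poissonWeight L j / L * if j ≤ n then tailRatio L n else -cdfRatio L n

lemma hasSum_singletonSolution (L : ℝ) (A : Set ℕ) (n : ℕ) :
    HasSum (fun j => A.indicator (singletonSolution L · n) j) (steinSolution L A (n + 1)) := by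
  have hsingleton : ∀ j, singletonSolution L j n = ((Iic n).indicator (poissonWeight L) j -
      poissonWeight L j * poissonCdf L (n + 1)) / (L * poissonWeight L n) := by
    intro j
    have htail := poissonCdf_add_poissonTail (L := L) (n + 1)
    by_cases hj : j ≤ n
    · rw [singletonSolution, if_pos hj, indicator_of_mem (mem_Iic.mpr hj), tailRatio,
        show poissonTail L (n + 1) = 1 - poissonCdf L (n + 1) by linarith]
      ring
    · rw [singletonSolution, if_neg hj, indicator_of_notMem (by simpa using hj), cdfRatio]
      ring
  have hhead : HasSum (fun j => (Iic n).indicator (A.indicator (poissonWeight L)) j)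
      (∑ j ∈ Finset.range (n + 1), A.indicator (poissonWeight L) j) := by
    rw [← Finset.sum_congr rfl fun j hj =>
      indicator_of_mem (show j ∈ Iic n by simpa [Nat.lt_succ_iff] using hj) _]
    exact hasSum_sum_of_ne_finset_zero fun j hj =>
      indicator_of_notMem (show j ∉ Iic n by simpa using hj) _
  have hvalue : steinSolution L A (n + 1) =
      (∑ j ∈ Finset.range (n + 1), A.indicator (poissonWeight L) j -
        poissonMass L A * poissonCdf L (n + 1)) / (L * poissonWeight L n) := by
    rw [steinSolution, poissonCdf, Finset.mul_sum, ← Finset.sum_sub_distrib]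
    congr 1
    refine Finset.sum_congr rfl fun j _ => ?_
    by_cases hj : j ∈ A
    · simp only [indicator_of_mem hj, Pi.one_apply]
      ring
    · simp only [indicator_of_notMem hj]
      ring
  rw [hvalue]
  refine ((hhead.sub ((hasSum_indicator_poissonWeight L A).mul_right _)).div_const _).congr_fun
    fun j => ?_
  by_cases hj : j ∈ A <;> simp [indicator_apply, hj, hsingleton]

lemma singletonSolution_succ_sub_nonpos (hL : 0 < L) {j m : ℕ} (hj : j ≠ m + 1) :
    singletonSolution L j (m + 1) - singletonSolution L j m ≤ 0 := by
  have hc : 0 ≤ poissonWeight L j / L := div_nonneg (poissonWeight_pos hL j).le hL.le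
  rw [singletonSolution, singletonSolution, ← mul_sub]
  refine mul_nonpos_of_nonneg_of_nonpos hc ?_
  rcases lt_or_gt_of_ne hj with hlt | hgt
  · rw [if_pos (by omega), if_pos (by omega), sub_nonpos]
    exact tailRatio_succ_le hL m
  · rw [if_neg (by omega), if_neg (by omega)]
    linarith [cdfRatio_le_succ hL m]

lemma singletonSolution_succ_sub_self_le (hL : 0 < L) (m : ℕ) :
    singletonSolution L (m + 1) (m + 1) - singletonSolution L (m + 1) m ≤ (1 - exp (-L)) / L := by
  rw [singletonSolution, singletonSolution, if_pos le_rfl, if_neg (by omega), ← mul_sub,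
    sub_neg_eq_add, div_mul_eq_mul_div]
  exact div_le_div_of_nonneg_right (poissonWeight_succ_mul_tailRatio_add_cdfRatio_le hL m) hL.le

lemma one_sub_exp_neg_div_nonneg (hL : 0 < L) : 0 ≤ (1 - exp (-L)) / L :=
  div_nonneg (sub_nonneg.mpr (exp_le_one_iff.mpr (neg_nonpos.mpr hL.le))) hL.le

lemma steinSolution_succ_sub_le (hL : 0 < L) (A : Set ℕ) (m : ℕ) :
    steinSolution L A (m + 2) - steinSolution L A (m + 1) ≤ (1 - exp (-L)) / L := by
  have hinc := (hasSum_singletonSolution L A (m + 1)).sub (hasSum_singletonSolution L A m)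
  rw [← indicator_sub] at hinc
  refine hasSum_le (fun j => ?_) hinc (hasSum_ite_eq (m + 1) ((1 - exp (-L)) / L))
  split_ifs with hj
  · subst hj
    exact indicator_apply_le' (fun _ => singletonSolution_succ_sub_self_le hL m)
      (fun _ => one_sub_exp_neg_div_nonneg hL)
  · exact indicator_apply_le' (fun _ => singletonSolution_succ_sub_nonpos hL hj) (fun _ => le_rfl)

lemma abs_steinSolution_succ_sub_le (hL : 0 < L) (A : Set ℕ) (m : ℕ) :
    |steinSolution L A (m + 2) - steinSolution L A (m + 1)| ≤ (1 - exp (-L)) / L := by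
  have hcompl := steinSolution_succ_sub_le hL Aᶜ m
  rw [steinSolution_compl, steinSolution_compl] at hcompl
  exact abs_le.mpr ⟨by linarith, steinSolution_succ_sub_le hL A m⟩

lemma poissonMeasure_real_eq_poissonMass (hL : 0 ≤ L) (A : Set ℕ) :
    (poissonMeasure L.toNNReal).real A = poissonMass L A := by
  rw [← integral_indicator_one (MeasurableSet.of_discrete), integral_poissonMeasure,
    Real.coe_toNNReal L hL, poissonMass]
  congr 1
  funext n
  by_cases hn : n ∈ A <;> simp [hn, poissonWeight]

lemma measureReal_sub_poissonMass_eq_integral (ν : Measure ℕ) [IsProbabilityMeasure ν]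
    (hL : L ≠ 0) (A : Set ℕ) :
    ν.real A - poissonMass L A =
      ∫ n, (L * steinSolution L A (n + 1) - n * steinSolution L A n) ∂ν := by
  simp_rw [steinSolution_stein_eq hL]
  rw [integral_sub ((integrable_const 1).indicator .of_discrete) (integrable_const _),
    integral_indicator_one .of_discrete, integral_const, probReal_univ, one_smul]

section Bernoulli

variable {Ω : Type*} [MeasurableSpace Ω] {μ : Measure Ω}

lemma ae_eq_zero_or_eq_one [IsProbabilityMeasure μ] {X : Ω → ℕ} (hX : Measurable X)
    (h : μ {ω | X ω = 0} + μ {ω | X ω = 1} = 1) : ∀ᵐ ω ∂μ, X ω = 0 ∨ X ω = 1 := by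
  have h0 : MeasurableSet {ω | X ω = 0} := hX (measurableSet_singleton 0)
  have h1 : MeasurableSet {ω | X ω = 1} := hX (measurableSet_singleton 1)
  have hdisj : Disjoint {ω | X ω = 0} {ω | X ω = 1} :=
    disjoint_left.mpr fun ω h0 h1 => by simp_all
  have hμ : μ ({ω | X ω = 0} ∪ {ω | X ω = 1}) = 1 := by rw [measure_union hdisj h1, h]
  exact mem_ae_iff.mpr ((prob_compl_eq_zero_iff (h0.union h1)).mpr hμ)

lemma integral_natCast_eq_measureReal {X : Ω → ℕ} (hX : Measurable X)
    (h01 : ∀ᵐ ω ∂μ, X ω = 0 ∨ X ω = 1) : ∫ ω, (X ω : ℝ) ∂μ = μ.real {ω | X ω = 1} := by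
  have h1 : MeasurableSet {ω | X ω = 1} := hX (measurableSet_singleton 1)
  rw [← integral_indicator_one h1]
  refine integral_congr_ae ?_
  filter_upwards [h01] with ω hω
  rcases hω with h | h <;> simp [h]

lemma integrable_comp_of_ae_le [IsFiniteMeasure μ] {Z : Ω → ℕ} (hZ : Measurable Z) {N : ℕ}
    (hZN : ∀ᵐ ω ∂μ, Z ω ≤ N) (f : ℕ → ℝ) : Integrable (fun ω => f (Z ω)) μ := by
  refine .of_bound (Measurable.of_discrete.comp hZ).aestronglyMeasurable
    (∑ n ∈ Finset.range (N + 1), |f n|) ?_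
  filter_upwards [hZN] with ω hω
  exact Finset.single_le_sum (f := fun n => |f n|) (fun n _ => abs_nonneg _)
    (Finset.mem_range.mpr (Nat.lt_succ_of_le hω))

lemma integrable_natCast_mul {X : Ω → ℕ} (hX : Measurable X)
    (h01 : ∀ᵐ ω ∂μ, X ω = 0 ∨ X ω = 1) {g : Ω → ℝ} (hg : Integrable g μ) :
    Integrable (fun ω => (X ω : ℝ) * g ω) μ := by
  refine hg.bdd_mul (c := 1) (Measurable.of_discrete.comp hX).aestronglyMeasurable ?_
  filter_upwards [h01] with ω hω
  rcases hω with h | h <;> simp [h]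

theorem integral_stein_bernoulli {X Y : Ω → ℕ} (hX : Measurable X)
    (hY : Measurable Y) (hXY : IndepFun X Y μ) (h01 : ∀ᵐ ω ∂μ, X ω = 0 ∨ X ω = 1) {p : ℝ}
    (hEX : ∫ ω, (X ω : ℝ) ∂μ = p) {f : ℕ → ℝ} (hf1 : Integrable (fun ω => f (Y ω + 1)) μ)
    (hf2 : Integrable (fun ω => f (Y ω + 2)) μ) :
    ∫ ω, (p * f (X ω + Y ω + 1) - X ω * f (X ω + Y ω)) ∂μ =
      p ^ 2 * ∫ ω, (f (Y ω + 2) - f (Y ω + 1)) ∂μ := by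
  have hmul : ∀ h : ℕ → ℝ, ∫ ω, (X ω : ℝ) * h (Y ω) ∂μ = p * ∫ ω, h (Y ω) ∂μ := fun h => by
    rw [← hEX]
    exact hXY.integral_fun_comp_mul_comp (f := fun n : ℕ => (n : ℝ)) hX.aemeasurable
      hY.aemeasurable .of_discrete .of_discrete
  have hΔ : Integrable (fun ω => f (Y ω + 2) - f (Y ω + 1)) μ := hf2.sub hf1
  have hXΔ := integrable_natCast_mul hX h01 hΔ
  have hae : (fun ω => p * f (X ω + Y ω + 1) - X ω * f (X ω + Y ω)) =ᵐ[μ] fun ω =>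
      p * f (Y ω + 1) + p * (X ω * (f (Y ω + 2) - f (Y ω + 1))) - X ω * f (Y ω + 1) := by
    filter_upwards [h01] with ω hω
    rcases hω with h | h
    · simp [h]
    · simp only [h, Nat.cast_one, one_mul, add_comm 1 (Y ω), add_assoc]
      ring
  rw [integral_congr_ae hae, integral_sub, integral_add, integral_const_mul, integral_const_mul,
    hmul (fun n => f (n + 2) - f (n + 1)), hmul (fun n => f (n + 1))]
  · ring
  all_goals first
    | exact hf1.const_mul p
    | exact hXΔ.const_mul p
    | exact integrable_natCast_mul hX h01 hf1
    | exact (hf1.const_mul p).add (hXΔ.const_mul p)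

theorem integral_stein_sum_bernoulli [IsFiniteMeasure μ] {ι : Type*} [Fintype ι]
    [DecidableEq ι] {X : ι → Ω → ℕ} {p : ι → ℝ} (hX : ∀ i, Measurable (X i))
    (hindep : iIndepFun X μ) (h01 : ∀ i, ∀ᵐ ω ∂μ, X i ω = 0 ∨ X i ω = 1)
    (hEX : ∀ i, ∫ ω, (X i ω : ℝ) ∂μ = p i) (f : ℕ → ℝ) :
    ∫ ω, ((∑ i, p i) * f (∑ i, X i ω + 1) - (∑ i, X i ω : ℕ) * f (∑ i, X i ω)) ∂μ =
      ∑ i, p i ^ 2 * ∫ ω, (f (∑ j ∈ Finset.univ.erase i, X j ω + 2) -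
        f (∑ j ∈ Finset.univ.erase i, X j ω + 1)) ∂μ := by
  have hW : Measurable fun ω => ∑ i, X i ω := Finset.measurable_fun_sum _ fun i _ => hX i
  have hWle : ∀ᵐ ω ∂μ, ∑ i, X i ω ≤ Fintype.card ι := by
    filter_upwards [ae_all_iff.mpr h01] with ω hω
    calc ∑ i, X i ω ≤ ∑ _i : ι, 1 :=
          Finset.sum_le_sum fun i _ => by rcases hω i with h | h <;> simp [h]
      _ = Fintype.card ι := by simp
  have hsplit : ∀ ω, (∑ i, p i) * f (∑ i, X i ω + 1) - (∑ i, X i ω : ℕ) * f (∑ i, X i ω) =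
      ∑ i, (p i * f (∑ i, X i ω + 1) - X i ω * f (∑ i, X i ω)) := fun ω => by
    push_cast
    rw [Finset.sum_sub_distrib, Finset.sum_mul, Finset.sum_mul]
  simp_rw [hsplit]
  rw [integral_finsetSum]
  swap
  · exact fun i _ => ((integrable_comp_of_ae_le hW hWle (f <| · + 1)).const_mul (p i)).sub
      (integrable_natCast_mul (hX i) (h01 i) (integrable_comp_of_ae_le hW hWle f))
  refine Finset.sum_congr rfl fun i _ => ?_
  have hY : Measurable fun ω => ∑ j ∈ Finset.univ.erase i, X j ω :=
    Finset.measurable_fun_sum _ fun j _ => hX j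
  have hYle : ∀ᵐ ω ∂μ, ∑ j ∈ Finset.univ.erase i, X j ω ≤ Fintype.card ι := by
    filter_upwards [hWle] with ω hω
    exact (Finset.sum_le_sum_of_subset (Finset.erase_subset i _)).trans hω
  have hXY : IndepFun (X i) (fun ω => ∑ j ∈ Finset.univ.erase i, X j ω) μ := by
    simpa [Finset.sum_fn] using
      (hindep.indepFun_finsetSum_of_notMem hX (Finset.notMem_erase i Finset.univ)).symm
  simp_rw [← Finset.add_sum_erase Finset.univ (fun j => X j _) (Finset.mem_univ i)]
  exact integral_stein_bernoulli (hX i) hY hXY (h01 i) (hEX i)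
    (integrable_comp_of_ae_le hY hYle (f <| · + 1)) (integrable_comp_of_ae_le hY hYle (f <| · + 2))

end Bernoulli

end ChenStein

open ChenStein

/-- Chen–Stein bound: if `W = X₁ + … + X_k` is a sum of independent Bernoulli random
variables with parameters `p₁, …, p_k` and `λ = Σ pᵢ > 0`, then for every `A ⊆ ℕ`,
`|P(W ∈ A) - Poisson(λ)(A)| ≤ ((1 - e^{-λ})/λ) Σ pᵢ²` (i.e. the total variation
distance between the law of `W` and `Poisson(λ)` is at most that bound). -/
theorem stmt6 {Ω : Type*} [MeasurableSpace Ω] (μ : Measure Ω) [IsProbabilityMeasure μ]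
    (k : ℕ) (p : Fin k → ℝ) (X : Fin k → Ω → ℕ)
    (hp : ∀ i, 0 ≤ p i) (hp1 : ∀ i, p i ≤ 1)
    (hmeas : ∀ i, Measurable (X i))
    (hBern1 : ∀ i, μ {ω | X i ω = 1} = ENNReal.ofReal (p i))
    (hBern0 : ∀ i, μ {ω | X i ω = 0} = ENNReal.ofReal (1 - p i))
    (hindep : iIndepFun X μ)
    (hpos : 0 < ∑ i, p i) :
    ∀ A : Set ℕ,
      |(μ.map (fun ω => ∑ i, X i ω) A).toReal
          - (poissonMeasure (∑ i, p i).toNNReal A).toReal|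
        ≤ ((1 - Real.exp (-(∑ i, p i))) / (∑ i, p i)) * ∑ i, (p i) ^ 2 := by
  intro A
  set L := ∑ i, p i
  have h01 : ∀ i, ∀ᵐ ω ∂μ, X i ω = 0 ∨ X i ω = 1 := fun i => ae_eq_zero_or_eq_one (hmeas i) (by
    rw [hBern0, hBern1, ← ENNReal.ofReal_add (by linarith [hp1 i]) (hp i), sub_add_cancel,
      ENNReal.ofReal_one])
  have hEX : ∀ i, ∫ ω, (X i ω : ℝ) ∂μ = p i := fun i => by
    rw [integral_natCast_eq_measureReal (hmeas i) (h01 i), measureReal_def, hBern1,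
      ENNReal.toReal_ofReal (hp i)]
  have hW : Measurable fun ω => ∑ i, X i ω := Finset.measurable_fun_sum _ fun i _ => hmeas i
  have := Measure.isProbabilityMeasure_map (μ := μ) hW.aemeasurable
  have hdiff : (μ.map (fun ω => ∑ i, X i ω) A).toReal - (poissonMeasure L.toNNReal A).toReal =
      ∑ i, p i ^ 2 * ∫ ω, (steinSolution L A (∑ j ∈ Finset.univ.erase i, X j ω + 2) -
        steinSolution L A (∑ j ∈ Finset.univ.erase i, X j ω + 1)) ∂μ := by
    rw [← measureReal_def, ← measureReal_def, poissonMeasure_real_eq_poissonMass hpos.le,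
      measureReal_sub_poissonMass_eq_integral _ hpos.ne',
      integral_map hW.aemeasurable .of_discrete, integral_stein_sum_bernoulli hmeas hindep h01 hEX]
  have hinc : ∀ i, |∫ ω, (steinSolution L A (∑ j ∈ Finset.univ.erase i, X j ω + 2) -
      steinSolution L A (∑ j ∈ Finset.univ.erase i, X j ω + 1)) ∂μ| ≤ (1 - exp (-L)) / L :=
    fun i => (norm_integral_le_of_norm_le_const (G := ℝ) (μ := μ) (.of_forall fun ω =>
      abs_steinSolution_succ_sub_le hpos A _)).trans_eq (by rw [probReal_univ, mul_one])
  rw [hdiff, Finset.mul_sum]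
  refine (Finset.abs_sum_le_sum_abs _ _).trans (Finset.sum_le_sum fun i _ => ?_)
  rw [abs_mul, abs_sq, mul_comm]
  exact mul_le_mul_of_nonneg_right (hinc i) (sq_nonneg _)
end

section
/- Let N ∼ Binomial(n, p) with np > 0. Then ‖L(N) − Poisson(np)‖_TV ≤ (1/(np)) · n p² = p. -/
/-!
Stein's method. For `A ⊆ ℕ` and `r = np`, the Stein equation
`r f (k + 1) - k f k = 𝟙_A k - Po(r)(A)` has an explicit solution whose increments
`f (j + 1) - f j`, `j ≥ 1`, are bounded by `1 / r`. Evaluating the Stein operator at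
`W ∼ Bin(n, p)`, the size-bias identity `E[W g W] = np E[g (W' + 1)]` with
`W' ∼ Bin(n - 1, p)` and the decomposition `W = W' + ξ` give
`E[r f (W + 1) - W f W] = np² E[f (W' + 2) - f (W' + 1)]`, hence
`|P(W ∈ A) - Po(r)(A)| ≤ np² / r = p`.
-/

open Set MeasureTheory ProbabilityTheory
open scoped NNReal ENNReal

namespace PoissonApproximation

section MeasureOnNat

variable {μ : Measure ℕ}

lemma measureReal_inter_Iio_succ [IsFiniteMeasure μ] (A : Set ℕ) (j : ℕ) :
    μ.real (A ∩ Iio (j + 1)) = μ.real (A ∩ Iio j) + μ.real (A ∩ {j}) := by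
  rw [← measureReal_union (by simp +contextual [Set.disjoint_left, ne_of_lt]) .of_discrete]
  congr 1
  ext k
  simp only [mem_inter_iff, mem_Iio, mem_union, mem_singleton_iff, Nat.lt_add_one_iff_lt_or_eq,
    and_or_left]

lemma measureReal_Iio_succ [IsFiniteMeasure μ] (j : ℕ) :
    μ.real (Iio (j + 1)) = μ.real (Iio j) + μ.real {j} := by
  simpa using measureReal_inter_Iio_succ (μ := μ) univ j

lemma measureReal_Iio_eq_sum [IsFiniteMeasure μ] (j : ℕ) :
    μ.real (Iio j) = ∑ i ∈ Finset.range j, μ.real {i} := by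
  rw [sum_measureReal_singleton, Finset.coe_range]

lemma probReal_Ici_eq_one_sub [IsProbabilityMeasure μ] (j : ℕ) :
    μ.real (Ici j) = 1 - μ.real (Iio j) := by
  rw [← compl_Iio, probReal_compl_eq_one_sub .of_discrete]

end MeasureOnNat

section Poisson

variable (r : ℝ≥0)

lemma hasSum_poissonMeasure_real_singleton : HasSum (fun k ↦ Po(r).real {k}) 1 := by
  simpa only [poissonMeasure_real_singleton] using hasSum_one_poissonMeasure r

lemma natCast_add_one_mul_poissonMeasure_real_singleton (k : ℕ) :
    (k + 1) * Po(r).real {k + 1} = r * Po(r).real {k} := by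
  simp only [poissonMeasure_real_singleton, Nat.factorial_succ]
  push_cast
  field_simp
  ring

lemma poissonMeasure_real_Ici (j : ℕ) :
    Po(r).real (Ici j) = ∑' i, Po(r).real {i + j} := by
  have h := (hasSum_poissonMeasure_real_singleton r).summable.sum_add_tsum_nat_add j
  rw [(hasSum_poissonMeasure_real_singleton r).tsum_eq, ← measureReal_Iio_eq_sum] at h
  rw [probReal_Ici_eq_one_sub]
  linarith

lemma natCast_mul_poissonMeasure_real_Ici_succ_le (j : ℕ) :
    j * Po(r).real (Ici (j + 1)) ≤ r * Po(r).real (Ici j) := by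
  have hs := (hasSum_poissonMeasure_real_singleton r).summable
  rw [poissonMeasure_real_Ici, poissonMeasure_real_Ici, ← tsum_mul_left, ← tsum_mul_left]
  refine Summable.tsum_le_tsum (fun i ↦ ?_) (((summable_nat_add_iff _).mpr hs).mul_left _)
    (((summable_nat_add_iff _).mpr hs).mul_left _)
  rw [← add_assoc, ← natCast_add_one_mul_poissonMeasure_real_singleton]
  gcongr
  push_cast
  linarith [(i.cast_nonneg : (0 : ℝ) ≤ i)]

lemma mul_poissonMeasure_real_Iio_le (j : ℕ) :
    r * Po(r).real (Iio j) ≤ j * Po(r).real (Iio (j + 1)) := by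
  rw [measureReal_Iio_eq_sum, measureReal_Iio_eq_sum, Finset.mul_sum,
    Finset.sum_range_succ', mul_add, Finset.mul_sum]
  refine le_add_of_le_of_nonneg (Finset.sum_le_sum fun i hi ↦ ?_)
    (mul_nonneg j.cast_nonneg measureReal_nonneg)
  rw [← natCast_add_one_mul_poissonMeasure_real_singleton]
  gcongr
  exact_mod_cast Finset.mem_range.mp hi

/-- The solution of the Stein equation `r f (k + 1) - k f k = 𝟙_A k - Po(r)(A)`, usually written
`f (j + 1) = (Po(r)(A ∩ [0, j]) - Po(r)(A) Po(r)([0, j])) / (r Po(r){j})`. Here `r Po(r){j}` is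
written as `(j + 1) Po(r){j + 1}`, so that one formula covers every `j`: at `j = 0` it is
`0 / 0`. -/
noncomputable def steinSolution (A : Set ℕ) (j : ℕ) : ℝ :=
  (Po(r).real (A ∩ Iio j) - Po(r).real A * Po(r).real (Iio j)) / (j * Po(r).real {j})

variable {r}

lemma steinSolution_compl (A : Set ℕ) (j : ℕ) :
    steinSolution r Aᶜ j = -steinSolution r A j := by
  have hA : Po(r).real (Aᶜ ∩ Iio j) = Po(r).real (Iio j) - Po(r).real (A ∩ Iio j) := by
    have h := measureReal_inter_add_sdiff (μ := Po(r)) (s := Iio j) (t := A) .of_discrete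
    rw [sdiff_eq, inter_comm (Iio j), inter_comm (Iio j)] at h
    linarith
  rw [steinSolution, steinSolution, hA, probReal_compl_eq_one_sub .of_discrete, ← neg_div]
  ring

lemma steinSolution_stein_eq (hr : 0 < r) (A : Set ℕ) (k : ℕ) :
    r * steinSolution r A (k + 1) - k * steinSolution r A k = A.indicator 1 k - Po(r).real A := by
  have hpj : 0 < Po(r).real {k} := poissonMeasure_real_singleton_pos k hr
  have hstep : Po(r).real (A ∩ Iio (k + 1)) - Po(r).real (A ∩ Iio k)
      = A.indicator 1 k * Po(r).real {k} := by
    rw [measureReal_inter_Iio_succ]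
    by_cases hk : k ∈ A <;> simp [hk]
  have hlow : k * steinSolution r A k
      = (Po(r).real (A ∩ Iio k) - Po(r).real A * Po(r).real (Iio k)) / Po(r).real {k} := by
    rcases Nat.eq_zero_or_pos k with rfl | hk
    · simp
    · rw [steinSolution]
      field_simp
  rw [hlow, steinSolution, Nat.cast_succ, natCast_add_one_mul_poissonMeasure_real_singleton,
    measureReal_Iio_succ]
  field_simp
  linear_combination hstep

lemma steinSolution_succ_sub_le (hr : 0 < r) (A : Set ℕ) {j : ℕ} (hj : j ≠ 0) :
    steinSolution r A (j + 1) - steinSolution r A j ≤ 1 / r := by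
  have hpj : 0 < Po(r).real {j} := poissonMeasure_real_singleton_pos j hr
  have hF := measureReal_Iio_succ (μ := Po(r)) j
  have htail := natCast_mul_poissonMeasure_real_Ici_succ_le r j
  rw [probReal_Ici_eq_one_sub, probReal_Ici_eq_one_sub, hF] at htail
  have hhead := mul_poissonMeasure_real_Iio_le r j
  have hG : 0 ≤ 1 - Po(r).real (Iio (j + 1)) := by
    rw [← probReal_Ici_eq_one_sub]; exact measureReal_nonneg
  rw [steinSolution, steinSolution, Nat.cast_succ,
    natCast_add_one_mul_poissonMeasure_real_singleton, measureReal_inter_Iio_succ,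
    div_sub_div _ _ (by positivity) (by positivity),
    div_le_div_iff₀ (by positivity) (by positivity)]
  rw [hF] at hhead hG ⊢
  set pj := Po(r).real {j}
  set F := Po(r).real (Iio j)
  set S := Po(r).real (A ∩ Iio j)
  set a := Po(r).real (A ∩ {j})
  set P := Po(r).real A
  have hS0 : 0 ≤ S := measureReal_nonneg
  have hapj : a ≤ pj := measureReal_mono inter_subset_right
  have hSP : S + a ≤ P := measureReal_inter_Iio_succ (μ := Po(r)) A j ▸
    measureReal_mono inter_subset_left
  -- The increment is linear in `S`, `a` and `P - S - a`; the two Poisson inequalities above fix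
  -- the signs of their coefficients.
  have key : j * (S + a - P * (F + pj)) - r * (S - P * F) ≤ j * pj := by
    have h1 : S * (j * (1 - (F + pj)) - r * (1 - F)) ≤ 0 :=
      mul_nonpos_of_nonneg_of_nonpos hS0 (by linarith)
    have h2 : 0 ≤ (P - S - a) * (j * (F + pj) - r * F) := mul_nonneg (by linarith) (by linarith)
    have h3 : a * (j * (1 - (F + pj)) + r * F) ≤ pj * (j * (1 - (F + pj)) + r * F) :=
      mul_le_mul_of_nonneg_right hapj (add_nonneg (mul_nonneg j.cast_nonneg hG) (by positivity))
    have h4 : pj * (j * (1 - (F + pj)) + r * F) ≤ pj * j := by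
      gcongr
      linarith
    linear_combination h1 + h2 + h3 + h4
  linear_combination (r * pj) * key

lemma abs_steinSolution_succ_sub_le (hr : 0 < r) (A : Set ℕ) {j : ℕ} (hj : j ≠ 0) :
    |steinSolution r A (j + 1) - steinSolution r A j| ≤ 1 / r := by
  have hcompl := steinSolution_succ_sub_le hr Aᶜ hj
  rw [steinSolution_compl, steinSolution_compl] at hcompl
  exact abs_sub_le_iff.mpr ⟨steinSolution_succ_sub_le hr A hj, by linarith⟩

end Poisson

open Finset

noncomputable def binomialWeight (n : ℕ) (p : ℝ) (k : ℕ) : ℝ :=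
  n.choose k * p ^ k * (1 - p) ^ (n - k)

noncomputable def binomialExpectation (n : ℕ) (p : ℝ) (g : ℕ → ℝ) : ℝ :=
  ∑ k ∈ range (n + 1), binomialWeight n p k * g k

section Weight

variable (n : ℕ) (p : ℝ)

lemma binomialWeight_nonneg (hp0 : 0 ≤ p) (hp1 : p ≤ 1) (k : ℕ) :
    0 ≤ binomialWeight n p k := by
  have : 0 ≤ 1 - p := by linarith
  unfold binomialWeight; positivity

lemma sum_binomialWeight : ∑ k ∈ range (n + 1), binomialWeight n p k = 1 := by
  have h := add_pow p (1 - p) n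
  rw [add_sub_cancel, one_pow] at h
  rw [h]
  exact sum_congr rfl fun k _ ↦ by rw [binomialWeight]; ring

lemma binomialWeight_succ_self : binomialWeight n p (n + 1) = 0 := by
  simp [binomialWeight]

lemma binomialWeight_succ_zero : binomialWeight (n + 1) p 0 = (1 - p) * binomialWeight n p 0 := by
  simp [binomialWeight, pow_succ, mul_comm]

lemma binomialWeight_succ_succ (k : ℕ) :
    binomialWeight (n + 1) p (k + 1)
      = (1 - p) * binomialWeight n p (k + 1) + p * binomialWeight n p k := by
  have h : (n.choose (k + 1) : ℝ) * (1 - p) ^ (n - k)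
      = (1 - p) * (n.choose (k + 1) * (1 - p) ^ (n - (k + 1))) := by
    rcases lt_or_ge n (k + 1) with hk | hk
    · simp [Nat.choose_eq_zero_of_lt hk]
    · rw [show n - k = n - (k + 1) + 1 by omega, pow_succ]
      ring
  simp only [binomialWeight, Nat.choose_succ_succ, Nat.add_sub_add_right]
  push_cast
  linear_combination p ^ (k + 1) * h

lemma natCast_add_one_mul_binomialWeight_succ (k : ℕ) :
    (k + 1) * binomialWeight (n + 1) p (k + 1) = (n + 1) * p * binomialWeight n p k := by
  have h : ((n + 1 : ℕ) : ℝ) * n.choose k = (n + 1).choose (k + 1) * (k + 1 : ℕ) := by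
    exact_mod_cast Nat.add_one_mul_choose_eq n k
  simp only [binomialWeight, Nat.add_sub_add_right]
  push_cast at h
  linear_combination (p ^ (k + 1) * (1 - p) ^ (n - k)) * h.symm

end Weight

section Expectation

variable (n : ℕ) (p : ℝ)

lemma binomialExpectation_sub (g h : ℕ → ℝ) :
    binomialExpectation n p (fun k ↦ g k - h k)
      = binomialExpectation n p g - binomialExpectation n p h := by
  simp only [binomialExpectation, mul_sub, sum_sub_distrib]

lemma binomialExpectation_const_mul (c : ℝ) (g : ℕ → ℝ) :
    binomialExpectation n p (fun k ↦ c * g k) = c * binomialExpectation n p g := by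
  simp only [binomialExpectation, mul_sum, mul_left_comm]

lemma binomialExpectation_const (c : ℝ) : binomialExpectation n p (fun _ ↦ c) = c := by
  rw [binomialExpectation, ← sum_mul, sum_binomialWeight, one_mul]

lemma abs_binomialExpectation_le (hp0 : 0 ≤ p) (hp1 : p ≤ 1) {g : ℕ → ℝ} {C : ℝ}
    (hg : ∀ k, |g k| ≤ C) : |binomialExpectation n p g| ≤ C := by
  calc |binomialExpectation n p g|
      ≤ ∑ k ∈ range (n + 1), binomialWeight n p k * |g k| := by
        refine (abs_sum_le_sum_abs _ _).trans_eq (sum_congr rfl fun k _ ↦ ?_)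
        rw [abs_mul, abs_of_nonneg (binomialWeight_nonneg n p hp0 hp1 k)]
    _ ≤ ∑ k ∈ range (n + 1), binomialWeight n p k * C :=
        sum_le_sum fun k _ ↦
          mul_le_mul_of_nonneg_left (hg k) (binomialWeight_nonneg n p hp0 hp1 k)
    _ = C := by rw [← sum_mul, sum_binomialWeight, one_mul]

lemma binomialExpectation_succ (g : ℕ → ℝ) :
    binomialExpectation (n + 1) p g
      = (1 - p) * binomialExpectation n p g
        + p * binomialExpectation n p (fun k ↦ g (k + 1)) := by
  have hshift : binomialExpectation n p g
      = ∑ k ∈ range (n + 1), binomialWeight n p (k + 1) * g (k + 1)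
        + binomialWeight n p 0 * g 0 := by
    rw [← sum_range_succ' (fun k ↦ binomialWeight n p k * g k), sum_range_succ,
      binomialWeight_succ_self, zero_mul, add_zero, binomialExpectation]
  rw [hshift, binomialExpectation, binomialExpectation, sum_range_succ', binomialWeight_succ_zero]
  simp only [binomialWeight_succ_succ, add_mul, mul_assoc, sum_add_distrib, ← mul_sum]
  ring

lemma binomialExpectation_succ_natCast_mul (g : ℕ → ℝ) :
    binomialExpectation (n + 1) p (fun k ↦ k * g k)
      = (n + 1) * p * binomialExpectation n p (fun k ↦ g (k + 1)) := by
  rw [binomialExpectation, sum_range_succ', binomialExpectation, mul_sum]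
  simp only [CharP.cast_eq_zero, zero_mul, mul_zero, add_zero, Nat.cast_succ]
  refine sum_congr rfl fun k _ ↦ ?_
  linear_combination g (k + 1) * natCast_add_one_mul_binomialWeight_succ n p k

lemma binomialExpectation_stein (g : ℕ → ℝ) :
    binomialExpectation (n + 1) p (fun k ↦ (n + 1) * p * g (k + 1) - k * g k)
      = (n + 1) * p ^ 2 * binomialExpectation n p (fun k ↦ g (k + 2) - g (k + 1)) := by
  rw [binomialExpectation_sub, binomialExpectation_const_mul, binomialExpectation_succ,
    binomialExpectation_succ_natCast_mul, binomialExpectation_sub]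
  ring

end Expectation

lemma toReal_binomial_apply {p : ℝ} (hp : 0 ≤ p) (h : p.toNNReal ≤ 1) (n : ℕ)
    (i : Fin (n + 1)) :
    (PMF.binomial p.toNNReal h n i).toReal = binomialWeight n p i := by
  rw [PMF.binomial, PMF.ofFintype_apply, ENNReal.coe_toReal, binomialWeight]
  push_cast [NNReal.coe_sub h, Real.coe_toNNReal p hp, Fin.val_last]
  ring

lemma toReal_map_val_binomial_apply {p : ℝ} (hp : 0 ≤ p) (h : p.toNNReal ≤ 1) (n : ℕ)
    (A : Set ℕ) :
    ((PMF.binomial p.toNNReal h n).toMeasure.map Fin.val A).toReal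
      = binomialExpectation n p (A.indicator 1) := by
  rw [Measure.map_apply (by fun_prop) .of_discrete, PMF.toMeasure_apply_fintype,
    ENNReal.toReal_sum fun i _ ↦ ((indicator_le_self _ _ i).trans_lt (PMF.apply_lt_top _ i)).ne,
    binomialExpectation, ← Fin.sum_univ_eq_sum_range]
  refine sum_congr rfl fun i _ ↦ ?_
  by_cases hi : (i : ℕ) ∈ A
  · simp [hi, toReal_binomial_apply hp]
  · simp [hi]

end PoissonApproximation

open PoissonApproximation

theorem stmt7_general (n : ℕ) (p : ℝ)
    (h : ENNReal.ofReal p ≤ 1) (hpos : 0 < n * p) :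
    ∀ A : Set ℕ,
      |(((PMF.binomial p.toNNReal (ENNReal.coe_le_one_iff.mp h) n).toMeasure.map (Fin.val)) A).toReal
          - (poissonMeasure ((n : ℝ) * p).toNNReal A).toReal|
        ≤ p := by
  intro A
  have hp : 0 < p := pos_of_mul_pos_right hpos n.cast_nonneg
  have hp1 : p ≤ 1 := ENNReal.ofReal_le_one.mp h
  obtain ⟨N, rfl⟩ := Nat.exists_eq_add_one_of_ne_zero (n := n) (by rintro rfl; simp at hpos)
  set r := ((N + 1 : ℕ) * p : ℝ).toNNReal
  have hr : (r : ℝ) = (N + 1) * p := by rw [Real.coe_toNNReal _ hpos.le]; push_cast; ring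
  have hr0 : 0 < r := by rw [← NNReal.coe_pos, hr]; positivity
  rw [toReal_map_val_binomial_apply hp.le, ← measureReal_def,
    ← binomialExpectation_const (N + 1) p (Po(r).real A), ← binomialExpectation_sub]
  have hstein : (fun k ↦ A.indicator 1 k - Po(r).real A)
      = fun k ↦ (N + 1) * p * steinSolution r A (k + 1) - k * steinSolution r A k :=
    funext fun k ↦ by rw [← hr, steinSolution_stein_eq hr0]
  rw [hstein, binomialExpectation_stein, abs_mul, abs_of_nonneg (by positivity)]
  calc (N + 1) * p ^ 2 * |binomialExpectation N p
          (fun k ↦ steinSolution r A (k + 2) - steinSolution r A (k + 1))|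
      ≤ (N + 1) * p ^ 2 * (1 / r) := by
        gcongr
        exact abs_binomialExpectation_le N p hp.le hp1
          fun k ↦ abs_steinSolution_succ_sub_le hr0 A k.succ_ne_zero
    _ = p := by rw [hr]; field_simp

/-- Binomial vs Poisson: if `N ∼ Binomial(n, p)` with `np > 0`, then the total variation
distance between the law of `N` and `Poisson(np)` is at most `(1/(np)) · n p² = p`:
for every `A ⊆ ℕ`, `|P(N ∈ A) - Poisson(np)(A)| ≤ p`. -/
theorem stmt7 (n : ℕ) (p : ℝ) (hp0 : 0 ≤ p) (hp1 : p ≤ 1)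
    (h : ENNReal.ofReal p ≤ 1) (hpos : 0 < n * p) :
    ∀ A : Set ℕ,
      |(((PMF.binomial p.toNNReal (ENNReal.coe_le_one_iff.mp h) n).toMeasure.map (Fin.val)) A).toReal
          - (poissonMeasure ((n : ℝ) * p).toNNReal A).toReal|
        ≤ p :=
  stmt7_general n p h hpos
end
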